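/- Consider 2×3 weight matrices. There are exactly 12 loop atoms: matrices ℓ : [2]×[3] → ℝ supported on the two rows and a pair of distinct columns {j, j'}, with three of the four entries on that support equal to +1 and one equal to −1, and zeros elsewhere. Let w : [2]×[3] → ℝ be any weight matrix such that the all-ones configuration is a ground state of the RBM energy E_w(v,h) = −Σ_{i,j} w_{ij} v_i h_j over {−1,1}² × {−1,1}³. Then there exist nonnegative coefficients x₁, …, x₁₂ ≥ 0 such that w − Σ_{k=1}^{12} x_k ℓ^{(k)} has all entries nonnegative; that is, every gauged 2×3 RBM instance is a conical combination of loop atoms plus a nonnegative matrix. -/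

import Mathlib

open Finset

/-- The RBM energy of an unbiased RBM with weight matrix `W`. -/
noncomputable def rbmEnergy {n m : ℕ} (W : Fin n → Fin m → ℝ)
    (v : Fin n → ℝ) (h : Fin m → ℝ) : ℝ :=
  -(∑ i, ∑ j, W i j * v i * h j)

/-- A loop atom (with negative weight `-1`): a matrix supported on two distinct rows
and two distinct columns, with three supported entries `+1` and one entry `-1`. -/
def IsLoopAtom {n m : ℕ} (A : Fin n → Fin m → ℝ) : Prop :=
  ∃ (i₁ i₂ : Fin n) (j₁ j₂ : Fin m), i₁ ≠ i₂ ∧ j₁ ≠ j₂ ∧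
    ((A i₁ j₁ = -1 ∧ A i₁ j₂ = 1 ∧ A i₂ j₁ = 1 ∧ A i₂ j₂ = 1) ∨
     (A i₁ j₁ = 1 ∧ A i₁ j₂ = -1 ∧ A i₂ j₁ = 1 ∧ A i₂ j₂ = 1) ∨
     (A i₁ j₁ = 1 ∧ A i₁ j₂ = 1 ∧ A i₂ j₁ = -1 ∧ A i₂ j₂ = 1) ∨
     (A i₁ j₁ = 1 ∧ A i₁ j₂ = 1 ∧ A i₂ j₁ = 1 ∧ A i₂ j₂ = -1)) ∧
    (∀ i j, ¬((i = i₁ ∨ i = i₂) ∧ (j = j₁ ∨ j = j₂)) → A i j = 0)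

/-!
Flipping the spins of a row set `S` and a column set `T` changes the energy by twice the weight
on the cut between `S` and `T`, so a gauged matrix puts nonnegative weight on every cut: every row,
every column, and every cross formed by a row and a column without their common entry.

Up to permuting rows and columns, a negative entry of a gauged `2 × 3` matrix sits at `(0, 0)`
and, by the cut inequalities, column `2` is nonnegative. At most one further entry is negative,
and it lies in column `1`. Each negative entry is then repaired by a loop atom through column `2`;
if `(0, 0)` is the only negative entry, its deficit is shared between columns `1` and `2` as far
as column `1` allows. The cut inequalities are exactly what keeps the other entries nonnegative.
-/

section

variable {n m : ℕ}

def loopAtom (i i' : Fin n) (j j' : Fin m) : Fin n → Fin m → ℝ :=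
  fun p q => if (p = i ∨ p = i') ∧ (q = j ∨ q = j') then if p = i ∧ q = j then -1 else 1 else 0

theorem isLoopAtom_loopAtom {i i' : Fin n} {j j' : Fin m} (hi : i ≠ i') (hj : j ≠ j') :
    IsLoopAtom (loopAtom i i' j j') :=
  ⟨i, i', j, j', hi, hj, Or.inl (by simp [loopAtom, hi.symm, hj.symm]),
    fun p q hpq => if_neg hpq⟩

theorem loopAtom_eq_of_apply {A : Fin n → Fin m → ℝ} {i i' : Fin n} {j j' : Fin m}
    (hi : i ≠ i') (hj : j ≠ j')
    (h₁ : A i j = -1) (h₂ : A i j' = 1) (h₃ : A i' j = 1) (h₄ : A i' j' = 1)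
    (h₀ : ∀ p q, ¬((p = i ∨ p = i') ∧ (q = j ∨ q = j')) → A p q = 0) :
    loopAtom i i' j j' = A := by
  funext p q
  unfold loopAtom
  split_ifs with hsupp hij
  · rw [hij.1, hij.2, h₁]
  · rcases hsupp with ⟨rfl | rfl, rfl | rfl⟩ <;> simp_all
  · exact (h₀ p q hsupp).symm

theorem isLoopAtom_iff {A : Fin n → Fin m → ℝ} :
    IsLoopAtom A ↔ ∃ i i' : Fin n, i ≠ i' ∧ ∃ j j' : Fin m, j ≠ j' ∧ loopAtom i i' j j' = A := by
  refine ⟨?_, fun ⟨i, i', hi, j, j', hj, hA⟩ => hA ▸ isLoopAtom_loopAtom hi hj⟩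
  rintro ⟨i, i', j, j', hi, hj, hpat, h₀⟩
  rcases hpat with ⟨h₁, h₂, h₃, h₄⟩ | ⟨h₁, h₂, h₃, h₄⟩ | ⟨h₁, h₂, h₃, h₄⟩ | ⟨h₁, h₂, h₃, h₄⟩
  · exact ⟨i, i', hi, j, j', hj, loopAtom_eq_of_apply hi hj h₁ h₂ h₃ h₄ h₀⟩
  · exact ⟨i, i', hi, j', j, hj.symm, loopAtom_eq_of_apply hi hj.symm h₂ h₁ h₄ h₃
      fun p q h => h₀ p q (by tauto)⟩
  · exact ⟨i', i, hi.symm, j, j', hj, loopAtom_eq_of_apply hi.symm hj h₃ h₄ h₁ h₂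
      fun p q h => h₀ p q (by tauto)⟩
  · exact ⟨i', i, hi.symm, j', j, hj.symm, loopAtom_eq_of_apply hi.symm hj.symm h₄ h₃ h₂ h₁
      fun p q h => h₀ p q (by tauto)⟩

noncomputable def loopAtoms (n m : ℕ) : Finset (Fin n → Fin m → ℝ) :=
  (univ.offDiag ×ˢ univ.offDiag).image fun x => loopAtom x.1.1 x.1.2 x.2.1 x.2.2

theorem coe_loopAtoms : (loopAtoms n m : Set (Fin n → Fin m → ℝ)) = {A | IsLoopAtom A} := by
  ext A
  simp only [loopAtoms, coe_image, coe_product, coe_offDiag, coe_univ, Set.mem_image, Set.mem_prod,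
    Set.mem_offDiag, Set.mem_univ, true_and, Prod.exists, isLoopAtom_iff, Set.mem_ofPred_eq]
  exact ⟨fun ⟨i, i', j, j', ⟨hi, hj⟩, h⟩ => ⟨i, i', hi, j, j', hj, h⟩,
    fun ⟨i, i', hi, j, j', hj, h⟩ => ⟨i, i', j, j', ⟨hi, hj⟩, h⟩⟩

theorem card_loopAtoms : (loopAtoms n m).card = n * (n - 1) * (m * (m - 1)) := by
  rw [loopAtoms, card_image_of_injOn, card_product, offDiag_card, offDiag_card]
  · simp [Nat.mul_sub_one]
  rintro ⟨⟨i, i'⟩, j, j'⟩ h ⟨⟨k, k'⟩, l, l'⟩ h' heq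
  simp only [coe_product, coe_offDiag, coe_univ, Set.mem_prod, Set.mem_offDiag, Set.mem_univ,
    true_and] at h h'
  -- the `-1` entry locates `(i, j)`; the `+1` entries at `(i', j)` and `(i, j')` locate `i'`, `j'`
  have e := fun p q => congrFun (congrFun heq p) q
  simp only [loopAtom] at e
  have := e i j
  have := e i' j
  have := e i j'
  grind

theorem ncard_setOf_isLoopAtom :
    {A : Fin n → Fin m → ℝ | IsLoopAtom A}.ncard = n * (n - 1) * (m * (m - 1)) := by
  rw [← coe_loopAtoms, Set.ncard_coe_finset, card_loopAtoms]

theorem isLoopAtom_reindex {A : Fin n → Fin m → ℝ} (hA : IsLoopAtom A)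
    (σ : Equiv.Perm (Fin n)) (τ : Equiv.Perm (Fin m)) :
    IsLoopAtom fun p q => A (σ p) (τ q) := by
  obtain ⟨i, i', hi, j, j', hj, rfl⟩ := isLoopAtom_iff.1 hA
  refine isLoopAtom_iff.2 ⟨σ.symm i, σ.symm i', by simpa using hi, τ.symm j, τ.symm j',
    by simpa using hj, ?_⟩
  funext p q
  simp [loopAtom, Equiv.eq_symm_apply]

def loopCone (n m : ℕ) : PointedCone ℝ (Fin n → Fin m → ℝ) :=
  PointedCone.hull ℝ {A | IsLoopAtom A}

theorem loopAtom_mem_loopCone {i i' : Fin n} {j j' : Fin m} (hi : i ≠ i')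
    (hj : j ≠ j') : loopAtom i i' j j' ∈ loopCone n m :=
  PointedCone.subset_hull (isLoopAtom_loopAtom hi hj)

theorem smul_loopAtom_add_smul_loopAtom_mem_loopCone {i₁ i₁' i₂ i₂' : Fin n}
    {j₁ j₁' j₂ j₂' : Fin m} (hi₁ : i₁ ≠ i₁') (hj₁ : j₁ ≠ j₁') (hi₂ : i₂ ≠ i₂') (hj₂ : j₂ ≠ j₂')
    {x y : ℝ} (hx : 0 ≤ x) (hy : 0 ≤ y) :
    x • loopAtom i₁ i₁' j₁ j₁' + y • loopAtom i₂ i₂' j₂ j₂' ∈ loopCone n m :=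
  add_mem (PointedCone.smul_mem _ hx (loopAtom_mem_loopCone hi₁ hj₁))
    (PointedCone.smul_mem _ hy (loopAtom_mem_loopCone hi₂ hj₂))

theorem reindex_mem_loopCone {c : Fin n → Fin m → ℝ} (hc : c ∈ loopCone n m)
    (σ : Equiv.Perm (Fin n)) (τ : Equiv.Perm (Fin m)) :
    (fun p q => c (σ p) (τ q)) ∈ loopCone n m := by
  induction hc using Submodule.span_induction with
  | mem A hA => exact PointedCone.subset_hull (isLoopAtom_reindex hA σ τ)
  | zero => exact zero_mem _
  | add x y _ _ hx hy => exact add_mem hx hy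
  | smul a x _ hx => exact Submodule.smul_mem _ a hx

theorem exists_mem_loopCone_le_of_reindex {W : Fin n → Fin m → ℝ}
    (σ : Equiv.Perm (Fin n)) (τ : Equiv.Perm (Fin m))
    (h : ∃ c ∈ loopCone n m, c ≤ fun p q => W (σ p) (τ q)) :
    ∃ c ∈ loopCone n m, c ≤ W := by
  obtain ⟨c, hc, hcW⟩ := h
  refine ⟨_, reindex_mem_loopCone hc σ.symm τ.symm, fun p q => ?_⟩
  simpa using hcW (σ.symm p) (τ.symm q)

def IsGauged (W : Fin n → Fin m → ℝ) : Prop :=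
  ∀ (v : Fin n → ℝ) (h : Fin m → ℝ), (∀ i, v i = 1 ∨ v i = -1) → (∀ j, h j = 1 ∨ h j = -1) →
    rbmEnergy W v h ≥ rbmEnergy W (fun _ => 1) (fun _ => 1)

theorem rbmEnergy_reindex (W : Fin n → Fin m → ℝ) (σ : Equiv.Perm (Fin n))
    (τ : Equiv.Perm (Fin m)) (v : Fin n → ℝ) (h : Fin m → ℝ) :
    rbmEnergy (fun p q => W (σ p) (τ q)) v h = rbmEnergy W (v ∘ σ.symm) (h ∘ τ.symm) := by
  unfold rbmEnergy
  congr 1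
  refine Fintype.sum_equiv σ _ _ fun p => Fintype.sum_equiv τ _ _ fun q => ?_
  simp

theorem IsGauged.reindex {W : Fin n → Fin m → ℝ} (hW : IsGauged W)
    (σ : Equiv.Perm (Fin n)) (τ : Equiv.Perm (Fin m)) :
    IsGauged fun p q => W (σ p) (τ q) := by
  intro v h hv hh
  rw [rbmEnergy_reindex, rbmEnergy_reindex]
  exact hW _ _ (fun i => hv _) (fun j => hh _)

theorem IsGauged.sum_cut_nonneg {W : Fin n → Fin m → ℝ} (hW : IsGauged W)
    (S : Finset (Fin n)) (T : Finset (Fin m)) :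
    0 ≤ ∑ i, ∑ j, if (i ∈ S ↔ j ∈ T) then 0 else W i j := by
  set v : Fin n → ℝ := fun i => if i ∈ S then -1 else 1
  set h : Fin m → ℝ := fun j => if j ∈ T then -1 else 1
  have hcut : ∀ i j, W i j * 1 * 1 - W i j * v i * h j
      = 2 * if (i ∈ S ↔ j ∈ T) then 0 else W i j := by
    intro i j
    by_cases hi : i ∈ S <;> by_cases hj : j ∈ T <;> simp [v, h, hi, hj] <;> ring
  have := hW v h (fun i => by by_cases hi : i ∈ S <;> simp [v, hi])
    (fun j => by by_cases hj : j ∈ T <;> simp [h, hj])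
  simp only [rbmEnergy, ge_iff_le, neg_le_neg_iff] at this
  have h2 : 0 ≤ ∑ i, ∑ j, (W i j * 1 * 1 - W i j * v i * h j) := by
    simp only [sum_sub_distrib]; linarith
  simp_rw [hcut, ← mul_sum] at h2
  linarith

end

theorem IsGauged.col_nonneg_of_nonpos {W : Fin 2 → Fin 3 → ℝ} (hW : IsGauged W)
    (h00 : W 0 0 ≤ 0) : (0 ≤ W 0 1 ∧ 0 ≤ W 1 1) ∨ (0 ≤ W 0 2 ∧ 0 ≤ W 1 2) := by
  have row₀ := hW.sum_cut_nonneg {0} ∅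
  have cross₀₁ := hW.sum_cut_nonneg {0} {1}
  have cross₀₂ := hW.sum_cut_nonneg {0} {2}
  have cross₁₀ := hW.sum_cut_nonneg {1} {0}
  simp [Fin.sum_univ_succ] at row₀ cross₀₁ cross₀₂ cross₁₀
  rcases le_or_gt 0 (W 0 1) with a₁ | a₁ <;> rcases le_or_gt 0 (W 0 2) with a₂ | a₂ <;>
    rcases le_or_gt 0 (W 1 1) with b₁ | b₁ <;> rcases le_or_gt 0 (W 1 2) with b₂ | b₂ <;>
    first | exact Or.inl ⟨a₁, b₁⟩ | exact Or.inr ⟨a₂, b₂⟩ | (exfalso; linarith)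

theorem exists_mem_loopCone_le_of_nonpos_of_col_nonneg {W : Fin 2 → Fin 3 → ℝ} (hW : IsGauged W)
    (h00 : W 0 0 ≤ 0) (h02 : 0 ≤ W 0 2) (h12 : 0 ≤ W 1 2) : ∃ c ∈ loopCone 2 3, c ≤ W := by
  have row₀ := hW.sum_cut_nonneg {0} ∅
  have col₀ := hW.sum_cut_nonneg ∅ {0}
  have col₁ := hW.sum_cut_nonneg ∅ {1}
  have cross₀₁ := hW.sum_cut_nonneg {0} {1}
  have cross₀₂ := hW.sum_cut_nonneg {0} {2}
  have cross₁₀ := hW.sum_cut_nonneg {1} {0}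
  simp [Fin.sum_univ_succ] at row₀ col₀ col₁ cross₀₁ cross₀₂ cross₁₀
  rcases lt_or_ge (W 0 1) 0 with h01 | h01
  · refine ⟨(-W 0 0) • loopAtom 0 1 0 2 + (-W 0 1) • loopAtom 0 1 1 2,
      smul_loopAtom_add_smul_loopAtom_mem_loopCone (by decide) (by decide) (by decide) (by decide)
        (by linarith) (by linarith), fun p q => ?_⟩
    fin_cases p <;> fin_cases q <;> simp [loopAtom] <;> linarith
  rcases lt_or_ge (W 1 1) 0 with h11 | h11
  · refine ⟨(-W 0 0) • loopAtom 0 1 0 2 + (-W 1 1) • loopAtom 1 0 1 2,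
      smul_loopAtom_add_smul_loopAtom_mem_loopCone (by decide) (by decide) (by decide) (by decide)
        (by linarith) (by linarith), fun p q => ?_⟩
    fin_cases p <;> fin_cases q <;> simp [loopAtom] <;> linarith
  set s := min (-W 0 0) (min (W 0 1) (W 1 1)) with hs
  have hs₀ : s ≤ -W 0 0 := min_le_left _ _
  have hs₁ : s ≤ W 0 1 := (min_le_right _ _).trans (min_le_left _ _)
  have hs₂ : s ≤ W 1 1 := (min_le_right _ _).trans (min_le_right _ _)
  have hs_cases : s = -W 0 0 ∨ s = W 0 1 ∨ s = W 1 1 := by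
    rcases min_choice (-W 0 0) (min (W 0 1) (W 1 1)) with h | h
    · exact Or.inl h
    · rcases min_choice (W 0 1) (W 1 1) with h' | h' <;> simp_all
  refine ⟨s • loopAtom 0 1 0 1 + (-W 0 0 - s) • loopAtom 0 1 0 2,
    smul_loopAtom_add_smul_loopAtom_mem_loopCone (by decide) (by decide) (by decide) (by decide)
      (le_min (by linarith) (le_min h01 h11)) (by linarith), fun p q => ?_⟩
  fin_cases p <;> fin_cases q <;> simp [loopAtom] <;> rcases hs_cases with h | h | h <;> linarith

theorem exists_mem_loopCone_le_of_nonpos {W : Fin 2 → Fin 3 → ℝ} (hW : IsGauged W)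
    (h00 : W 0 0 ≤ 0) : ∃ c ∈ loopCone 2 3, c ≤ W := by
  rcases hW.col_nonneg_of_nonpos h00 with ⟨h01, h11⟩ | ⟨h02, h12⟩
  · refine exists_mem_loopCone_le_of_reindex 1 (Equiv.swap 1 2)
      (exists_mem_loopCone_le_of_nonpos_of_col_nonneg (hW.reindex _ _) ?_ ?_ ?_) <;>
      simpa [Equiv.swap_apply_of_ne_of_ne]
  · exact exists_mem_loopCone_le_of_nonpos_of_col_nonneg hW h00 h02 h12

theorem IsGauged.exists_mem_loopCone_le {W : Fin 2 → Fin 3 → ℝ} (hW : IsGauged W) :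
    ∃ c ∈ loopCone 2 3, c ≤ W := by
  by_cases hnn : 0 ≤ W
  · exact ⟨0, zero_mem _, hnn⟩
  obtain ⟨i, j, hij⟩ : ∃ i j, W i j < 0 := by
    simpa only [Pi.le_def, Pi.zero_apply, not_forall, not_le] using hnn
  refine exists_mem_loopCone_le_of_reindex (Equiv.swap 0 i) (Equiv.swap 0 j)
    (exists_mem_loopCone_le_of_nonpos (hW.reindex _ _) ?_)
  simpa using hij.le

theorem gauged_two_by_three_is_conical_combination
    (w : Fin 2 → Fin 3 → ℝ)
    (hgauged : ∀ (v : Fin 2 → ℝ) (h : Fin 3 → ℝ),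
      (∀ i, v i = 1 ∨ v i = -1) → (∀ j, h j = 1 ∨ h j = -1) →
      rbmEnergy w v h ≥ rbmEnergy w (fun _ => 1) (fun _ => 1)) :
    -- there are exactly 12 loop atoms on a 2×3 matrix
    {A : Fin 2 → Fin 3 → ℝ | IsLoopAtom A}.ncard = 12 ∧
    -- and `w` is a conical combination of the 12 loop atoms plus a nonnegative matrix
    ∃ (ℓ : Fin 12 → Fin 2 → Fin 3 → ℝ) (x : Fin 12 → ℝ),
      Function.Injective ℓ ∧ (∀ k, IsLoopAtom (ℓ k)) ∧ (∀ k, 0 ≤ x k) ∧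
      ∀ i j, 0 ≤ w i j - ∑ k, x k * ℓ k i j := by
  have hcard : {A : Fin 2 → Fin 3 → ℝ | IsLoopAtom A}.ncard = 12 := ncard_setOf_isLoopAtom
  refine ⟨hcard, ?_⟩
  have hfin : {A : Fin 2 → Fin 3 → ℝ | IsLoopAtom A}.Finite :=
    Set.finite_of_ncard_ne_zero (by rw [hcard]; norm_num)
  obtain ⟨k, ℓ, hℓ, hrange⟩ := hfin.fin_param
  obtain rfl : k = 12 := by rw [← hcard, ← hrange, Set.ncard_range_of_injective hℓ, Nat.card_fin]
  obtain ⟨c, hc, hcw⟩ := IsGauged.exists_mem_loopCone_le hgauged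
  rw [loopCone, ← hrange] at hc
  obtain ⟨x, rfl⟩ := (Submodule.mem_span_range_iff_exists_fun _).1 hc
  refine ⟨ℓ, fun k => x k, hℓ, fun k => hrange.subset (Set.mem_range_self k), fun k => (x k).2,
    fun i j => ?_⟩
  have := hcw i j
  simp only [Finset.sum_apply, Pi.smul_apply, ← Nonneg.coe_smul, smul_eq_mul] at this
  linarith
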